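/- arXiv:1708.00642 — 3 statements merged into one kernel-verified Lean document; each statement's English description precedes it below -/
import Mathlib

section
/- Let η be a countable ordinal, (R^ρ)_{ρ≤η} be a resolution family (each R^{ρ+1} distinguished in R^ρ, and R^λ = ⋂_{ρ<λ} R^ρ at limits), and ρ < η. If s, t, u ∈ 2^{<ω} satisfy s R^0 t, t R^ρ u, and s R^{ρ+1} u, then s R^{ρ+1} t. -/
/-- A tree relation on `2^{<ω}` (finite binary sequences, encoded as `List Bool`):
a partial order `R` such that the empty sequence is `R`-below every sequence, and for
every `s` the set of `R`-predecessors of `s` is finite and linearly ordered by `R`. -/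
structure TreeRel where
  R : List Bool → List Bool → Prop
  refl : ∀ s, R s s
  trans : ∀ s t u, R s t → R t u → R s u
  antisymm : ∀ s t, R s t → R t s → s = t
  nil_rel : ∀ s, R [] s
  pred_finite : ∀ s, {t | R t s}.Finite
  pred_chain : ∀ s t u, R t s → R u s → R t u ∨ R u t

/-- `γ : ℕ → List Bool` is the strictly `R`-increasing enumeration of an infinite
`R`-branch (a ⊆-maximal subset of `2^{<ω}` linearly ordered by `R`): it is strictly
`R`-increasing and its range is downward closed under `R` (which characterizes maximal
infinite chains of a tree relation). -/
def IsBranch (R : List Bool → List Bool → Prop) (γ : ℕ → List Bool) : Prop :=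
  (∀ k, R (γ k) (γ (k+1)) ∧ γ k ≠ γ (k+1)) ∧
  (∀ t k, R t (γ k) → ∃ j ≤ k, γ j = t)

/-- `R` is distinguished in `S` (`R ⊆ S`): whenever `s S t S u` and `s R u`, then `s R t`. -/
def Distinguished (R S : List Bool → List Bool → Prop) : Prop :=
  ∀ s t u, S s t → S t u → R s u → R s t

/-- A resolution family `(R^ρ)_{ρ≤η}`: a family of tree relations such that `R^{ρ+1}`
is a distinguished subtree of `R^ρ` for `ρ < η`, and `R^λ = ⋂_{ρ<λ} R^ρ` at limits. -/
def IsResolutionFamily (η : Ordinal.{0}) (R : Ordinal.{0} → List Bool → List Bool → Prop) : Prop :=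
  (∀ ρ ≤ η, ∃ T : TreeRel, T.R = R ρ) ∧
  (∀ ρ : Ordinal, ρ + 1 ≤ η → (∀ s t, R (ρ+1) s t → R ρ s t) ∧ Distinguished (R (ρ+1)) (R ρ)) ∧
  (∀ l ≤ η, Order.IsSuccLimit l → ∀ s t, (R l s t ↔ ∀ ρ < l, R ρ s t))

namespace IsResolutionFamily

variable {η : Ordinal.{0}} {R : Ordinal.{0} → List Bool → List Bool → Prop}

theorem rel_anti (hR : IsResolutionFamily η R) {σ τ : Ordinal.{0}} (hστ : σ ≤ τ) (hτ : τ ≤ η)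
    {s t : List Bool} (h : R τ s t) : R σ s t := by
  induction τ using Ordinal.limitRecOn generalizing σ with
  | zero => rwa [nonpos_iff_eq_zero.mp hστ]
  | add_one τ ih =>
    rcases hστ.eq_or_lt with rfl | hlt
    · exact h
    · exact ih (Order.lt_succ_iff.mp hlt) ((Order.le_succ τ).trans hτ) ((hR.2.1 τ hτ).1 s t h)
  | limit l hl _ =>
    rcases hστ.eq_or_lt with rfl | hlt
    · exact h
    · exact (hR.2.2 l hτ hl s t).mp h σ hlt

/-- Induction on `σ ≤ ρ + 1`: at a successor `σ + 1`, the relations `s R^σ t R^σ u` and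
`s R^{σ+1} u` are inherited from the hypotheses, and distinguishedness yields `s R^{σ+1} t`. -/
theorem rel_succ_of_rel_zero (hR : IsResolutionFamily η R) {ρ : Ordinal.{0}} (hρ : ρ < η)
    {s t u : List Bool} (hst : R 0 s t) (htu : R ρ t u) (hsu : R (ρ + 1) s u) :
    ∀ σ ≤ ρ + 1, R σ s t := by
  have hρη : ρ + 1 ≤ η := Order.add_one_le_of_lt hρ
  intro σ
  induction σ using Ordinal.limitRecOn with
  | zero => exact fun _ => hst
  | add_one σ ih =>
    intro hσ
    have hσρ : σ ≤ ρ := Order.le_of_lt_add_one (Order.add_one_le_iff.mp hσ)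
    exact (hR.2.1 σ (hσ.trans hρη)).2 s t u (ih ((Order.le_succ σ).trans hσ))
      (hR.rel_anti hσρ hρ.le htu) (hR.rel_anti hσ hρη hsu)
  | limit l hl ih =>
    intro hl'
    exact (hR.2.2 l (hl'.trans hρη) hl s t).mpr fun σ hσ => ih σ hσ (hσ.le.trans hl')

end IsResolutionFamily

theorem stmt_7_general (η : Ordinal.{0})
    (R : Ordinal.{0} → List Bool → List Bool → Prop) (hR : IsResolutionFamily η R)
    (ρ : Ordinal.{0}) (hρ : ρ < η) (s t u : List Bool)
    (h1 : R 0 s t) (h2 : R ρ t u) (h3 : R (ρ+1) s u) : R (ρ+1) s t :=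
  hR.rel_succ_of_rel_zero hρ h1 h2 h3 (ρ + 1) le_rfl

/-- Lemma 2.3.2 of [L3]: for a resolution family `(R^ρ)_{ρ≤η}` with `η`
a countable ordinal and `ρ < η`, if `s R^0 t`, `t R^ρ u` and `s R^{ρ+1} u`,
then `s R^{ρ+1} t`. -/
theorem stmt_7 (η : Ordinal.{0}) (hη : η.card ≤ Cardinal.aleph0)
    (R : Ordinal.{0} → List Bool → List Bool → Prop) (hR : IsResolutionFamily η R)
    (ρ : Ordinal.{0}) (hρ : ρ < η) (s t u : List Bool)
    (h1 : R 0 s t) (h2 : R ρ t u) (h3 : R (ρ+1) s u) : R (ρ+1) s t :=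
  stmt_7_general η R hR ρ hρ s t u h1 h2 h3
end

section
/- Let ξ ≥ 1 be a countable ordinal, Q ⊆ 2^ω be a Π⁰_ξ set which is not Σ⁰_ξ, and P := h[Q] ⊆ [⊆] its image under the canonical homeomorphism h : 2^ω → [⊆]. Let (R^ρ)_{ρ≤η} be a resolution family with R^0 = ⊆ such that the canonical map Π : [R^η] → [⊆] is a continuous bijection with Σ⁰_ξ-measurable inverse (ξ = η+1). Set A := {(β,α) ∈ [R^η] × [⊆] : Π(β) = α ∈ P} and B := {(β,α) : Π(β) = α ∉ P}. Then A cannot be separated from B by a countable union of rectangles of the form O × S with O open in [R^η] and S ∈ Σ⁰_ξ([⊆]). -/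
/-- The boldface class `Σ⁰_ξ` of the Borel hierarchy on a topological space:
`Σ⁰_ξ` contains the open sets, and for `ξ > 1` the countable unions
`⋃ₙ Cₙ` where each `Cₙ` is the complement of a `Σ⁰_{ρₙ}` set with `1 ≤ ρₙ < ξ`. -/
inductive Sig0 (X : Type*) [TopologicalSpace X] : Ordinal.{0} → Set X → Prop
  | of_open (ξ : Ordinal) (A : Set X) : IsOpen A → Sig0 X ξ A
  | union (ξ : Ordinal) (g : ℕ → Ordinal) (f : ℕ → Set X) :
      (∀ n, 1 ≤ g n) → (∀ n, g n < ξ) → (∀ n, Sig0 X (g n) (f n)) → Sig0 X ξ (⋃ n, (f n)ᶜ)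

/-- The boldface class `Π⁰_ξ`: complements of `Σ⁰_ξ` sets. -/
def Pi0 (X : Type*) [TopologicalSpace X] (ξ : Ordinal.{0}) (A : Set X) : Prop := Sig0 X ξ Aᶜ

/-- `2^{<ω}` carries the discrete topology. -/
instance : TopologicalSpace (List Bool) := ⊥

/-- The initial segment (prefix) relation `⊆` on `2^{<ω}`. -/
def prefixRel : List Bool → List Bool → Prop := fun s t => s <+: t

/-- The space of infinite `R`-branches (identified with their increasing
enumerations), with the topology induced by the product of discrete topologies. -/
abbrev Branches (R : List Bool → List Bool → Prop) := {γ : ℕ → List Bool // IsBranch R γ}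

/-- The image `h[Q] ⊆ [⊆]` of `Q ⊆ 2^ω` under the canonical homeomorphism `h` sending
`α` to the sequence of its initial segments. -/
def cantorImage (Q : Set (ℕ → Bool)) : Set (Branches prefixRel) :=
  {γ | ∃ α ∈ Q, ∀ n, γ.1 n = List.ofFn (fun i : Fin n => α i)}

instance : DiscreteTopology (List Bool) := ⟨rfl⟩

instance (R : List Bool → List Bool → Prop) : TopologicalSpace.MetrizableSpace (Branches R) :=
  Topology.IsEmbedding.subtypeVal.metrizableSpace

namespace Sig0

variable {X Y : Type*} [TopologicalSpace X] [TopologicalSpace Y]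

theorem mono {ρ ξ : Ordinal} {A : Set X} (h : Sig0 X ρ A) (hρξ : ρ ≤ ξ) : Sig0 X ξ A := by
  cases h with
  | of_open _ _ hA => exact of_open _ _ hA
  | union _ g f hg1 hg2 hf => exact union _ g f hg1 (fun n => (hg2 n).trans_le hρξ) hf

theorem isOpen_of_le_one {ξ : Ordinal} {A : Set X} (hξ : ξ ≤ 1) (h : Sig0 X ξ A) : IsOpen A := by
  cases h with
  | of_open _ _ hA => exact hA
  | union _ g f hg1 hg2 hf => exact absurd ((hg2 0).trans_le hξ) (hg1 0).not_gt

theorem preimage {ξ : Ordinal} {A : Set Y} {f : X → Y} (hf : Continuous f)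
    (h : Sig0 Y ξ A) : Sig0 X ξ (f ⁻¹' A) := by
  induction h with
  | of_open _ A hA => exact of_open _ _ (hA.preimage hf)
  | union _ g F hg1 hg2 hF ih =>
      simpa only [Set.preimage_iUnion, Set.preimage_compl] using union _ g _ hg1 hg2 ih

theorem iUnion_compl {ι : Type*} [Countable ι] {ξ : Ordinal} (g : ι → Ordinal) (f : ι → Set X)
    (hg1 : ∀ i, 1 ≤ g i) (hg2 : ∀ i, g i < ξ) (hf : ∀ i, Sig0 X (g i) (f i)) :
    Sig0 X ξ (⋃ i, (f i)ᶜ) := by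
  cases isEmpty_or_nonempty ι
  · simpa only [Set.iUnion_of_empty] using of_open ξ _ isOpen_empty
  · obtain ⟨e, he⟩ := exists_surjective_nat ι
    rw [← he.iUnion_comp]
    exact union _ _ _ (fun n => hg1 (e n)) (fun n => hg2 (e n)) (fun n => hf (e n))

theorem exists_eq_iUnion_compl [PerfectlyNormalSpace X] {ξ : Ordinal} {A : Set X} (hξ : 1 < ξ)
    (h : Sig0 X ξ A) :
    ∃ (g : ℕ → Ordinal) (f : ℕ → Set X),
      (∀ n, 1 ≤ g n) ∧ (∀ n, g n < ξ) ∧ (∀ n, Sig0 X (g n) (f n)) ∧ A = ⋃ n, (f n)ᶜ := by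
  cases h with
  | of_open _ _ hA =>
      obtain ⟨f, hf, hAf⟩ := isGδ_iff_eq_iInter_nat.1 hA.isClosed_compl.isGδ
      refine ⟨fun _ => 1, f, fun _ => le_rfl, fun _ => hξ, fun n => of_open _ _ (hf n), ?_⟩
      rw [← Set.compl_iInter, ← hAf, compl_compl]
  | union _ g f hg1 hg2 hf => exact ⟨g, f, hg1, hg2, hf, rfl⟩

variable [PerfectlyNormalSpace X] {ξ : Ordinal}

theorem iUnion {ι : Type*} [Countable ι] {A : ι → Set X} (h : ∀ i, Sig0 X ξ (A i)) :
    Sig0 X ξ (⋃ i, A i) := by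
  rcases le_or_gt ξ 1 with hξ | hξ
  · exact of_open _ _ (isOpen_iUnion fun i => (h i).isOpen_of_le_one hξ)
  · choose g f hg1 hg2 hf hA using fun i => (h i).exists_eq_iUnion_compl hξ
    simp_rw [hA]
    rw [← Set.iUnion_prod' fun p => (f p.1 p.2)ᶜ]
    exact iUnion_compl _ _ (fun p => hg1 _ _) (fun p => hg2 _ _) (fun p => hf _ _)

theorem union' {A B : Set X} (hA : Sig0 X ξ A) (hB : Sig0 X ξ B) : Sig0 X ξ (A ∪ B) := by
  rw [Set.union_eq_iUnion]
  exact iUnion fun b => by cases b <;> assumption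

theorem inter {A B : Set X} (hA : Sig0 X ξ A) (hB : Sig0 X ξ B) : Sig0 X ξ (A ∩ B) := by
  rcases le_or_gt ξ 1 with hξ | hξ
  · exact of_open _ _ ((hA.isOpen_of_le_one hξ).inter (hB.isOpen_of_le_one hξ))
  · obtain ⟨g, f, hg1, hg2, hf, rfl⟩ := hA.exists_eq_iUnion_compl hξ
    obtain ⟨g', f', hg1', hg2', hf', rfl⟩ := hB.exists_eq_iUnion_compl hξ
    simp_rw [Set.iUnion_inter_iUnion, ← Set.compl_union]
    rw [← Set.iUnion_prod' fun p => (f p.1 ∪ f' p.2)ᶜ]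
    exact iUnion_compl (fun p => max (g p.1) (g' p.2)) _
      (fun p => (hg1 _).trans (le_max_left _ _)) (fun p => max_lt (hg2 _) (hg2' _))
      (fun p => ((hf _).mono (le_max_left _ _)).union' ((hf' _).mono (le_max_right _ _)))

end Sig0

theorem isBranch_prefixRel_ofFn (α : ℕ → Bool) :
    IsBranch prefixRel (fun n => List.ofFn fun i : Fin n => α i) := by
  refine ⟨fun k => ⟨?_, ?_⟩, fun t k (ht : t <+: _) => ⟨t.length, ?_, ?_⟩⟩
  · exact ⟨[α k], by dsimp only; rw [List.ofFn_succ', List.concat_eq_append]; rfl⟩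
  · exact fun h => by simpa using congrArg List.length h
  · simpa using ht.length_le
  · refine List.ext_getElem (by simp) fun n h1 h2 => ?_
    rw [List.getElem_ofFn, ht.getElem h2, List.getElem_ofFn]

/-- The canonical map `h : 2^ω → [⊆]`. -/
def prefixBranch (α : ℕ → Bool) : Branches prefixRel :=
  ⟨fun n => List.ofFn fun i : Fin n => α i, isBranch_prefixRel_ofFn α⟩

theorem continuous_prefixBranch : Continuous prefixBranch := by
  refine Continuous.subtype_mk (continuous_pi fun n => ?_) _
  exact (continuous_of_discreteTopology (f := List.ofFn (n := n) (α := Bool))).comp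
    (by fun_prop : Continuous fun (α : ℕ → Bool) (i : Fin n) => α i)

theorem prefixBranch_injective : Function.Injective prefixBranch := by
  intro α β h
  funext i
  have h' := congrArg (fun γ : Branches prefixRel => (γ.1 (i + 1))[i]?) h
  simpa only [prefixBranch, List.getElem?_ofFn, dif_pos i.lt_succ_self, Option.some.injEq] using h'

theorem prefixBranch_preimage_cantorImage (Q : Set (ℕ → Bool)) :
    prefixBranch ⁻¹' cantorImage Q = Q := by
  ext α
  refine ⟨fun ⟨β, hβ, hαβ⟩ => ?_, fun hα => ⟨α, hα, fun _ => rfl⟩⟩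
  rwa [prefixBranch_injective (Subtype.ext (funext hαβ) : prefixBranch α = prefixBranch β)]

theorem eq_iUnion_preimage_inter_of_separates {X Y ι : Type*} {Pi : X → Y} {g : Y → X}
    (hg : Function.RightInverse g Pi) {P : Set Y} {O : ι → Set X} {S : ι → Set Y}
    (hA : {p : X × Y | Pi p.1 = p.2 ∧ p.2 ∈ P} ⊆ ⋃ n, O n ×ˢ S n)
    (hB : (⋃ n, O n ×ˢ S n) ∩ {p : X × Y | Pi p.1 = p.2 ∧ p.2 ∉ P} = ∅) :
    P = ⋃ n, g ⁻¹' O n ∩ S n := by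
  ext α
  have hgα : (g α, α) ∈ ⋃ n, O n ×ˢ S n ↔ α ∈ ⋃ n, g ⁻¹' O n ∩ S n := by
    simp only [Set.mem_iUnion, Set.mem_prod, Set.mem_inter_iff, Set.mem_preimage]
  rw [← hgα]
  refine ⟨fun hα => hA ⟨hg α, hα⟩, fun hα => ?_⟩
  by_contra hP
  exact (Set.eq_empty_iff_forall_notMem.1 hB) _ ⟨hα, hg α, hP⟩

theorem stmt_12_general (ξ η : Ordinal.{0})
    (R : Ordinal.{0} → List Bool → List Bool → Prop)
    (Q : Set (ℕ → Bool)) (hQ2 : ¬ Sig0 (ℕ → Bool) ξ Q)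
    (Pi : Branches (R η) → Branches prefixRel)
    (g : Branches prefixRel → Branches (R η))
    (hg2 : Function.RightInverse g Pi)
    (hgmeas : ∀ U : Set (Branches (R η)), IsOpen U → Sig0 (Branches prefixRel) ξ (g ⁻¹' U)) :
    ¬ ∃ (O : ℕ → Set (Branches (R η))) (S : ℕ → Set (Branches prefixRel)),
        (∀ n, IsOpen (O n) ∧ Sig0 (Branches prefixRel) ξ (S n)) ∧
        {p : Branches (R η) × Branches prefixRel | Pi p.1 = p.2 ∧ p.2 ∈ cantorImage Q}
          ⊆ (⋃ n, O n ×ˢ S n) ∧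
        (⋃ n, O n ×ˢ S n) ∩
          {p : Branches (R η) × Branches prefixRel | Pi p.1 = p.2 ∧ p.2 ∉ cantorImage Q}
          = ∅ := by
  rintro ⟨O, S, hOS, hA, hB⟩
  have hP : Sig0 (Branches prefixRel) ξ (cantorImage Q) := by
    rw [eq_iUnion_preimage_inter_of_separates hg2 hA hB]
    exact Sig0.iUnion fun n => (hgmeas _ (hOS n).1).inter (hOS n).2
  exact hQ2 (prefixBranch_preimage_cantorImage Q ▸ hP.preimage continuous_prefixBranch)

/-- Lemma `nonsep1x`: let `ξ = η + 1 ≥ 1` be a countable ordinal,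
`Q ⊆ 2^ω` be `Π⁰_ξ` but not `Σ⁰_ξ`, `P := h[Q] ⊆ [⊆]`, `(R^ρ)_{ρ≤η}` a resolution
family with `R^0 = ⊆` whose canonical map `Π : [R^η] → [⊆]` is a continuous bijection
with `Σ⁰_ξ`-measurable inverse. Set `𝔸 := {(β,α) : Π(β) = α ∈ P}` and
`𝔹 := {(β,α) : Π(β) = α ∉ P}`. Then `𝔸` is not separable from `𝔹` by a countable
union of rectangles `O × S` with `O` open in `[R^η]` and `S ∈ Σ⁰_ξ([⊆])`. -/
theorem stmt_12 (ξ η : Ordinal.{0}) (hξc : ξ.card ≤ Cardinal.aleph0) (hξ1 : 1 ≤ ξ)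
    (hξη : ξ = η + 1)
    (R : Ordinal.{0} → List Bool → List Bool → Prop) (hR : IsResolutionFamily η R)
    (hR0 : R 0 = prefixRel)
    (Q : Set (ℕ → Bool)) (hQ1 : Pi0 (ℕ → Bool) ξ Q) (hQ2 : ¬ Sig0 (ℕ → Bool) ξ Q)
    (Pi : Branches (R η) → Branches prefixRel)
    (hPican : ∀ γ, Set.range γ.1 ⊆ Set.range (Pi γ).1)
    (hPicont : Continuous Pi) (hPibij : Function.Bijective Pi)
    (g : Branches prefixRel → Branches (R η))
    (hg1 : Function.LeftInverse g Pi) (hg2 : Function.RightInverse g Pi)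
    (hgmeas : ∀ U : Set (Branches (R η)), IsOpen U → Sig0 (Branches prefixRel) ξ (g ⁻¹' U)) :
    ¬ ∃ (O : ℕ → Set (Branches (R η))) (S : ℕ → Set (Branches prefixRel)),
        (∀ n, IsOpen (O n) ∧ Sig0 (Branches prefixRel) ξ (S n)) ∧
        {p : Branches (R η) × Branches prefixRel | Pi p.1 = p.2 ∧ p.2 ∈ cantorImage Q}
          ⊆ (⋃ n, O n ×ˢ S n) ∧
        (⋃ n, O n ×ˢ S n) ∩
          {p : Branches (R η) × Branches prefixRel | Pi p.1 = p.2 ∧ p.2 ∉ cantorImage Q}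
          = ∅ :=
  stmt_12_general ξ η R Q hQ2 Pi g hg2 hgmeas
end

section
/- Let ξ ≥ 1 be a countable ordinal, Q ⊆ 2^ω be Π⁰_ξ but not Σ⁰_ξ, P := h[Q] ⊆ [⊆], and let Π : Z → [⊆] be a continuous bijection from a Polish space Z with Σ⁰_ξ-measurable inverse such that Π⁻¹(P) is closed in Z. Define 𝕏 := Z ⊕ Π⁻¹([⊆]∖P), 𝕐 := [⊆] ⊕ Π⁻¹([⊆]∖P), 𝔸 := {((0,β),(1,γ)) : β = γ} ∪ {((1,γ),(0,α)) : Π(γ) = α}, and 𝔹 := {((0,β),(0,α)) : Π(β) = α ∈ P}. Then 𝔸 cannot be separated from 𝔹 by any rectangle C × S with C closed in 𝕏 and S ∈ Π⁰_ξ(𝕐). -/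
section Aux

open TopologicalSpace

instance inst_s16 : DiscreteTopology (List Bool) := ⟨rfl⟩

/-- Preimages under continuous maps preserve `Σ⁰_ξ`. -/
lemma sig0_preimage {X Y : Type*} [TopologicalSpace X] [TopologicalSpace Y] {f : X → Y}
    (hf : Continuous f) {ξ : Ordinal.{0}} {A : Set Y} (h : Sig0 Y ξ A) :
    Sig0 X ξ (f ⁻¹' A) := by
  induction h with
  | of_open ξ A hA => exact .of_open _ _ (hA.preimage hf)
  | union ξ g s h1 h2 h3 ih =>
      rw [Set.preimage_iUnion]
      simp only [Set.preimage_compl]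
      exact .union ξ g _ h1 h2 ih

/-- In a pseudometrizable space every open set is a countable union of closed sets. -/
lemma open_eq_iUnion_compl {X : Type*} [TopologicalSpace X] [PseudoMetrizableSpace X]
    {U : Set X} (hU : IsOpen U) :
    ∃ V : ℕ → Set X, (∀ n, IsOpen (V n)) ∧ U = ⋃ n, (V n)ᶜ := by
  letI := pseudoMetrizableSpacePseudoMetric X
  obtain ⟨V, hVo, hVe⟩ := (hU.isClosed_compl.isGδ).eq_iInter_nat
  refine ⟨V, hVo, ?_⟩
  rw [← compl_compl U, hVe, Set.compl_iInter]

lemma sig0_rep {X : Type*} [TopologicalSpace X] [PseudoMetrizableSpace X]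
    {ξ : Ordinal.{0}} (h12 : 1 < ξ) {A : Set X} (h : Sig0 X ξ A) :
    ∃ (g : ℕ → Ordinal.{0}) (f : ℕ → Set X), (∀ n, 1 ≤ g n) ∧ (∀ n, g n < ξ) ∧
      (∀ n, Sig0 X (g n) (f n)) ∧ A = ⋃ n, (f n)ᶜ := by
  cases h with
  | of_open _ _ ho =>
      obtain ⟨V, hVo, hVe⟩ := open_eq_iUnion_compl ho
      exact ⟨fun _ => 1, V, fun _ => le_refl 1, fun _ => h12,
        fun n => .of_open _ _ (hVo n), hVe⟩
  | union _ g f h1 h2 h3 => exact ⟨g, f, h1, h2, h3, rfl⟩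

lemma sig0_union2_aux {X : Type*} [TopologicalSpace X] {ξ : Ordinal.{0}}
    {A B : Set X}
    (hA : ∃ (g : ℕ → Ordinal.{0}) (f : ℕ → Set X), (∀ n, 1 ≤ g n) ∧ (∀ n, g n < ξ) ∧
      (∀ n, Sig0 X (g n) (f n)) ∧ A = ⋃ n, (f n)ᶜ)
    (hB : ∃ (g : ℕ → Ordinal.{0}) (f : ℕ → Set X), (∀ n, 1 ≤ g n) ∧ (∀ n, g n < ξ) ∧
      (∀ n, Sig0 X (g n) (f n)) ∧ B = ⋃ n, (f n)ᶜ) :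
    Sig0 X ξ (A ∪ B) := by
  obtain ⟨ga, fa, ha1, ha2, ha3, rfl⟩ := hA
  obtain ⟨gb, fb, hb1, hb2, hb3, rfl⟩ := hB
  set gc : ℕ → Ordinal.{0} := fun k => if Even k then ga (k / 2) else gb (k / 2) with hgc
  set fc : ℕ → Set X := fun k => if Even k then fa (k / 2) else fb (k / 2) with hfc
  have heq : (⋃ n, (fa n)ᶜ) ∪ (⋃ n, (fb n)ᶜ) = ⋃ k, (fc k)ᶜ := by
    ext x
    simp only [Set.mem_union, Set.mem_iUnion, Set.mem_compl_iff]
    constructor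
    · rintro (⟨n, hn⟩ | ⟨n, hn⟩)
      · refine ⟨2 * n, ?_⟩
        have h1 : Even (2 * n) := even_two_mul n
        have h2 : 2 * n / 2 = n := by omega
        simp only [hfc, if_pos h1, h2]
        exact hn
      · refine ⟨2 * n + 1, ?_⟩
        have h1 : ¬ Even (2 * n + 1) := by rw [Nat.even_iff]; omega
        have h2 : (2 * n + 1) / 2 = n := by omega
        simp only [hfc, if_neg h1, h2]
        exact hn
    · rintro ⟨k, hk⟩
      by_cases h : Even k
      · left
        exact ⟨k / 2, by simpa only [hfc, if_pos h] using hk⟩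
      · right
        exact ⟨k / 2, by simpa only [hfc, if_neg h] using hk⟩
  rw [heq]
  refine Sig0.union ξ gc fc ?_ ?_ ?_
  · intro n; simp only [hgc]; split <;> [exact ha1 _; exact hb1 _]
  · intro n; simp only [hgc]; split <;> [exact ha2 _; exact hb2 _]
  · intro n; simp only [hgc, hfc]; split <;> [exact ha3 _; exact hb3 _]

/-- `Σ⁰_ξ` is closed under binary unions (in a pseudometrizable space). -/
lemma sig0_union2 {X : Type*} [TopologicalSpace X] [PseudoMetrizableSpace X]
    {ξ : Ordinal.{0}} {A B : Set X} (hA : Sig0 X ξ A) (hB : Sig0 X ξ B) :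
    Sig0 X ξ (A ∪ B) := by
  rcases hA with ⟨_, _, hAo⟩ | ⟨_, gA, fA, hA1, hA2, hA3⟩
  · rcases hB with ⟨_, _, hBo⟩ | ⟨_, gB, fB, hB1, hB2, hB3⟩
    · exact .of_open _ _ (hAo.union hBo)
    · have h12 : 1 < ξ := lt_of_le_of_lt (hB1 0) (hB2 0)
      exact sig0_union2_aux (sig0_rep h12 (.of_open _ _ hAo))
        ⟨gB, fB, hB1, hB2, hB3, rfl⟩
  · have h12 : 1 < ξ := lt_of_le_of_lt (hA1 0) (hA2 0)
    exact sig0_union2_aux ⟨gA, fA, hA1, hA2, hA3, rfl⟩ (sig0_rep h12 hB)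

/-- The branch of initial segments of `α : 2^ω`. -/
def hFun (α : ℕ → Bool) : ℕ → List Bool := fun n => List.ofFn (fun i : Fin n => α i)

lemma hFun_succ (α : ℕ → Bool) (k : ℕ) : hFun α (k + 1) = (hFun α k).concat (α k) := by
  have := List.ofFn_succ' (fun i : Fin (k + 1) => α i)
  simpa [hFun, Fin.coe_castSucc, Fin.val_last] using this

lemma hFun_length (α : ℕ → Bool) (n : ℕ) : (hFun α n).length = n := by
  simp [hFun]

lemma hFun_prefix (α : ℕ → Bool) {j k : ℕ} (h : j ≤ k) : hFun α j <+: hFun α k := by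
  induction k, h using Nat.le_induction with
  | base => exact List.prefix_rfl
  | succ k hk ih =>
      refine ih.trans ?_
      rw [hFun_succ, List.concat_eq_append]
      exact List.prefix_append _ _

lemma hFun_branch (α : ℕ → Bool) : IsBranch prefixRel (hFun α) := by
  constructor
  · intro k
    refine ⟨hFun_prefix α (Nat.le_succ k), fun he => ?_⟩
    have := congrArg List.length he
    rw [hFun_length, hFun_length] at this
    omega
  · intro t k ht
    have ht' : t <+: hFun α k := ht
    have hl : t.length ≤ k := by
      have := ht'.length_le
      rwa [hFun_length] at this
    refine ⟨t.length, hl, ?_⟩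
    have h1 : hFun α t.length <+: hFun α k := hFun_prefix α hl
    have e1 := List.prefix_iff_eq_take.mp ht'
    have e2 := List.prefix_iff_eq_take.mp h1
    rw [hFun_length] at e2
    rw [e2, ← e1]

/-- The canonical homeomorphism `h : 2^ω → [⊆]`. -/
def hMap (α : ℕ → Bool) : Branches prefixRel := ⟨hFun α, hFun_branch α⟩

lemma hMap_cont : Continuous hMap := by
  refine Continuous.subtype_mk ?_ _
  refine continuous_pi fun n => ?_
  have : (fun α : ℕ → Bool => hFun α n) =
      (fun v : Fin n → Bool => List.ofFn v) ∘ (fun (α : ℕ → Bool) (i : Fin n) => α i) := rfl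
  rw [this]
  exact continuous_of_discreteTopology.comp (continuous_pi fun i => continuous_apply (i : ℕ))

instance : TopologicalSpace.PseudoMetrizableSpace (Branches prefixRel) :=
  (Topology.IsInducing.subtypeVal (t := {γ | IsBranch prefixRel γ})).pseudoMetrizableSpace

lemma hMap_preimage (Q : Set (ℕ → Bool)) : hMap ⁻¹' cantorImage Q = Q := by
  ext α
  simp only [cantorImage, Set.mem_preimage, Set.mem_setOf_eq]
  constructor
  · rintro ⟨α', hα', he⟩
    have : α = α' := by
      funext i
      have h := he (i + 1)
      have h' : (fun j : Fin (i + 1) => α (j : ℕ)) = fun j : Fin (i + 1) => α' (j : ℕ) :=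
        List.ofFn_injective h
      exact congrFun h' ⟨i, Nat.lt_succ_self i⟩
    rw [this]; exact hα'
  · intro hα
    exact ⟨α, hα, fun n => rfl⟩

end Aux

/-- Lemma `nonsep1xrect`: let `ξ ≥ 1` be countable, `Q ⊆ 2^ω` be
`Π⁰_ξ` but not `Σ⁰_ξ`, `P := h[Q] ⊆ [⊆]`, and `Π : Z → [⊆]` a continuous bijection
from a Polish space `Z`, with `Σ⁰_ξ`-measurable inverse `g`, such that `Π⁻¹(P)` is
closed in `Z`. With `𝕏 := Z ⊕ Π⁻¹([⊆]∖P)`, `𝕐 := [⊆] ⊕ Π⁻¹([⊆]∖P)`,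
`𝔸 := {((0,β),(1,γ)) : β = γ} ∪ {((1,γ),(0,α)) : Π(γ) = α}` and
`𝔹 := {((0,β),(0,α)) : Π(β) = α ∈ P}`, the set `𝔸` cannot be separated from `𝔹` by
any rectangle `C × S` with `C` closed in `𝕏` and `S ∈ Π⁰_ξ(𝕐)`. -/
theorem stmt_16 (ξ : Ordinal.{0}) (hξc : ξ.card ≤ Cardinal.aleph0) (hξ1 : 1 ≤ ξ)
    (Q : Set (ℕ → Bool)) (hQ1 : Pi0 (ℕ → Bool) ξ Q) (hQ2 : ¬ Sig0 (ℕ → Bool) ξ Q)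
    (Z : Type) [TopologicalSpace Z] [PolishSpace Z]
    (Pi : Z → Branches prefixRel) (hc : Continuous Pi) (hb : Function.Bijective Pi)
    (g : Branches prefixRel → Z)
    (hg1 : Function.LeftInverse g Pi) (hg2 : Function.RightInverse g Pi)
    (hgmeas : ∀ U : Set Z, IsOpen U → Sig0 (Branches prefixRel) ξ (g ⁻¹' U))
    (hclosed : IsClosed (Pi ⁻¹' cantorImage Q)) :
    ¬ ∃ (C : Set (Z ⊕ {z : Z // Pi z ∉ cantorImage Q}))
        (S : Set (Branches prefixRel ⊕ {z : Z // Pi z ∉ cantorImage Q})),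
        IsClosed C ∧ Pi0 (Branches prefixRel ⊕ {z : Z // Pi z ∉ cantorImage Q}) ξ S ∧
        ({p : (Z ⊕ {z : Z // Pi z ∉ cantorImage Q}) ×
              (Branches prefixRel ⊕ {z : Z // Pi z ∉ cantorImage Q}) |
            ∃ (β : Z) (γ : {z : Z // Pi z ∉ cantorImage Q}),
              p = (Sum.inl β, Sum.inr γ) ∧ β = γ.1} ∪
         {p | ∃ (γ : {z : Z // Pi z ∉ cantorImage Q}) (α : Branches prefixRel),
              p = (Sum.inr γ, Sum.inl α) ∧ Pi γ.1 = α}) ⊆ C ×ˢ S ∧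
        (C ×ˢ S) ∩
         {p | ∃ (β : Z) (α : Branches prefixRel),
              p = (Sum.inl β, Sum.inl α) ∧ Pi β = α ∧ α ∈ cantorImage Q} = ∅ := by
  rintro ⟨C, S, hCcl, hSpi, hsub, hdis⟩
  have hC' : IsClosed (Sum.inl ⁻¹' C : Set Z) := hCcl.preimage continuous_inl
  have key1 : ∀ α : Branches prefixRel, α ∉ cantorImage Q →
      g α ∈ (Sum.inl ⁻¹' C : Set Z) ∧ α ∈ (Sum.inl ⁻¹' S : Set (Branches prefixRel)) := by
    intro α hα
    have hPi : Pi (g α) = α := hg2 α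
    have hmem : Pi (g α) ∉ cantorImage Q := by rw [hPi]; exact hα
    constructor
    · exact (hsub (Or.inl ⟨g α, ⟨g α, hmem⟩, rfl, rfl⟩)).1
    · exact (hsub (Or.inr ⟨⟨g α, hmem⟩, α, rfl, hPi⟩)).2
  have key2 : ∀ α ∈ cantorImage Q,
      ¬ (g α ∈ (Sum.inl ⁻¹' C : Set Z) ∧ α ∈ (Sum.inl ⁻¹' S : Set (Branches prefixRel))) := by
    rintro α hα ⟨h1, h2⟩
    have hm : ((Sum.inl (g α), Sum.inl α) :
        (Z ⊕ {z : Z // Pi z ∉ cantorImage Q}) ×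
          (Branches prefixRel ⊕ {z : Z // Pi z ∉ cantorImage Q}))
        ∈ (C ×ˢ S) ∩
          {p | ∃ (β : Z) (α : Branches prefixRel),
            p = (Sum.inl β, Sum.inl α) ∧ Pi β = α ∧ α ∈ cantorImage Q} :=
      ⟨⟨h1, h2⟩, ⟨g α, α, rfl, hg2 α, hα⟩⟩
    rw [hdis] at hm
    exact hm
  have hPeq : cantorImage Q = g ⁻¹' (Sum.inl ⁻¹' C : Set Z)ᶜ ∪
      (Sum.inl ⁻¹' Sᶜ : Set (Branches prefixRel)) := by
    ext α
    simp only [Set.mem_union, Set.mem_preimage, Set.mem_compl_iff]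
    constructor
    · intro hα
      by_contra hc
      push_neg at hc
      exact key2 α hα ⟨hc.1, hc.2⟩
    · intro h
      by_contra hα
      obtain ⟨h1, h2⟩ := key1 α hα
      rcases h with h | h
      · exact h h1
      · exact h h2
  have hs1 : Sig0 (Branches prefixRel) ξ (g ⁻¹' (Sum.inl ⁻¹' C : Set Z)ᶜ) :=
    hgmeas _ hC'.isOpen_compl
  have hs2 : Sig0 (Branches prefixRel) ξ (Sum.inl ⁻¹' Sᶜ) :=
    sig0_preimage (continuous_inl :
      Continuous (Sum.inl : Branches prefixRel → Branches prefixRel ⊕ _)) hSpi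
  have hP : Sig0 (Branches prefixRel) ξ (cantorImage Q) := by
    rw [hPeq]
    exact sig0_union2 hs1 hs2
  have hQ : Sig0 (ℕ → Bool) ξ Q := by
    have := sig0_preimage hMap_cont hP
    rwa [hMap_preimage] at this
  exact hQ2 hQ
end
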